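/- arXiv:2010.00307 — 5 statements merged into one kernel-verified Lean document; each statement's English description precedes it below -/
import Mathlib

section
/- Let α ≥ 2 be an integer and β > 0 a real number with β < (1/2)·(α·H(1/α) − (α−1)·H(1/(2(α−1))) − 1). Then there exists a natural number k₀ (depending only on α and β) such that for every integer k ≥ k₀ there exists a family 𝒮 of subsets of Fin (α·k) satisfying: (1) every S ∈ 𝒮 has cardinality k; (2) the cardinality of 𝒮 equals ⌊2^{β·k}⌋; (3) for any two distinct S, S' ∈ 𝒮, the cardinality of S ∩ S' is at most k/2. -/
/-!
Greedy construction with entropy estimates. A fixed `k`-subset `S` of an `n`-set shares more than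
`k / 2` points with at most `2 ^ k * C(n - k, ⌊k/2⌋)` other `k`-subsets (choose `S ∩ T ⊆ S`, then
fewer than `k / 2` points of `T` outside `S`). So `k`-sets with pairwise small intersections can be
picked greedily, `M` of them, as long as `M * 2 ^ k * C(n - k, ⌊k/2⌋) < C(n, k)`.
For `n = α k` the binomial coefficients are estimated by
`C(n, m) ≤ 2 ^ (n H(m/n)) ≤ (n + 1) C(n, m)`: `C(n, m) m^m (n-m)^(n-m)` is the largest of the
`n + 1` terms of `(m + (n - m)) ^ n = n ^ n`. The greedy condition then reduces to
`αk + 1 < 2 ^ ((α H(1/α) - (α-1) H(1/(2(α-1))) - 1 - β) k)`, which holds for large `k`.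
-/

/-- The binary entropy function `H(x) = -x·log₂ x - (1-x)·log₂(1-x)`. -/
noncomputable def binEnt (x : ℝ) : ℝ :=
  -x * Real.logb 2 x - (1 - x) * Real.logb 2 (1 - x)

open Finset Filter Real
open scoped Nat

lemma binEnt_eq_binEntropy_div_log_two (x : ℝ) : binEnt x = binEntropy x / log 2 := by
  rw [binEnt, binEntropy, log_inv, log_inv, logb, logb]
  ring

lemma binEnt_monotoneOn : MonotoneOn binEnt (Set.Icc 0 2⁻¹) := fun x hx y hy hxy => by
  simpa only [binEnt_eq_binEntropy_div_log_two] using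
    div_le_div_of_nonneg_right (binEntropy_strictMonoOn.monotoneOn hx hy hxy)
      (log_nonneg one_le_two)

/-- The `i`-th term of the binomial expansion of `n ^ n = (m + (n - m)) ^ n`. -/
def binomialTerm (n m i : ℕ) : ℕ := n.choose i * m ^ i * (n - m) ^ (n - i)

lemma sum_binomialTerm {n m : ℕ} (hm : m ≤ n) :
    ∑ i ∈ range (n + 1), binomialTerm n m i = n ^ n := by
  have h := add_pow m (n - m) n
  rw [Nat.add_sub_cancel' hm] at h
  rw [h]
  exact sum_congr rfl fun i _ => by rw [binomialTerm, Nat.cast_id]; ring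

lemma binomialTerm_le_of_le {n m i : ℕ} (hi : i ≤ m) (hm : m ≤ n) :
    binomialTerm n m i ≤ binomialTerm n m m := by
  obtain ⟨d, rfl⟩ := Nat.exists_eq_add_of_le hi
  obtain ⟨e, rfl⟩ := Nat.exists_eq_add_of_le hm
  have hfact : (i + d)! ≤ i ! * (i + d) ^ d := by
    rw [← Nat.factorial_mul_descFactorial (Nat.le_add_left d i), Nat.add_sub_cancel]
    exact Nat.mul_le_mul_left _ (Nat.descFactorial_le_pow (i + d) d)
  have hfact' : e ! * e ^ d ≤ (d + e)! := by
    simpa using Nat.factorial_mul_pow_sub_le_factorial (Nat.le_add_left e d)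
  have hchoose := Nat.choose_mul_factorial_mul_factorial (show i ≤ i + d + e by omega)
  have hchoose' := Nat.choose_mul_factorial_mul_factorial (Nat.le_add_right (i + d) e)
  have hsub : i + d + e - i = d + e := by omega
  have hsub' : i + d + e - (i + d) = e := by omega
  rw [hsub] at hchoose
  rw [hsub'] at hchoose'
  rw [binomialTerm, binomialTerm, hsub, hsub']
  refine Nat.le_of_mul_le_mul_right (c := (i + d)! * e !) ?_
    (Nat.mul_pos (Nat.factorial_pos _) (Nat.factorial_pos _))
  calc (i + d + e).choose i * (i + d) ^ i * e ^ (d + e) * ((i + d)! * e !)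
      ≤ (i + d + e).choose i * (i + d) ^ i * e ^ (d + e) * (i ! * (i + d) ^ d * e !) := by
        gcongr
    _ = (i + d + e).choose i * i ! * (e ! * e ^ d) * ((i + d) ^ (i + d) * e ^ e) := by ring
    _ ≤ (i + d + e).choose i * i ! * (d + e)! * ((i + d) ^ (i + d) * e ^ e) := by gcongr
    _ = (i + d + e).choose (i + d) * (i + d) ^ (i + d) * e ^ e * ((i + d)! * e !) := by
        rw [hchoose, ← hchoose']; ring

lemma binomialTerm_sub_sub {n m i : ℕ} (hm : m ≤ n) (hi : i ≤ n) :
    binomialTerm n (n - m) (n - i) = binomialTerm n m i := by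
  rw [binomialTerm, binomialTerm, Nat.choose_symm hi, Nat.sub_sub_self hm, Nat.sub_sub_self hi]
  ring

lemma binomialTerm_le {n m : ℕ} (hm : m ≤ n) (i : ℕ) :
    binomialTerm n m i ≤ binomialTerm n m m := by
  rcases le_total i m with him | hmi
  · exact binomialTerm_le_of_le him hm
  rcases le_or_gt i n with hin | hni
  · rw [← binomialTerm_sub_sub hm hin, ← binomialTerm_sub_sub hm hm]
    exact binomialTerm_le_of_le (Nat.sub_le_sub_left hmi n) (Nat.sub_le n m)
  · simp [binomialTerm, Nat.choose_eq_zero_of_lt hni]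

lemma binomialTerm_self_le_pow_self {n m : ℕ} (hm : m ≤ n) : binomialTerm n m m ≤ n ^ n :=
  sum_binomialTerm hm ▸ single_le_sum (fun _ _ => Nat.zero_le _) (mem_range_succ_iff.2 hm)

lemma pow_self_le_succ_mul_binomialTerm_self {n m : ℕ} (hm : m ≤ n) :
    n ^ n ≤ (n + 1) * binomialTerm n m m := by
  simpa [← sum_binomialTerm hm] using sum_le_card_nsmul (range (n + 1)) _ _
    fun i _ => binomialTerm_le hm i

lemma two_rpow_mul_binEnt_div_mul_pow_mul_pow {n m : ℕ} (hm : 0 < m) (hmn : m < n) :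
    (2 : ℝ) ^ (n * binEnt (m / n)) * ((m : ℝ) ^ m * ((n - m : ℕ) : ℝ) ^ (n - m)) = (n : ℝ) ^ n := by
  have hpow : ∀ a : ℕ, 0 < a → (2 : ℝ) ^ ((a : ℝ) * logb 2 a) = (a : ℝ) ^ a := fun a ha => by
    rw [mul_comm, rpow_mul zero_le_two, rpow_logb two_pos one_lt_two.ne' (by positivity),
      rpow_natCast]
  have hsub : ((n - m : ℕ) : ℝ) = n - m := Nat.cast_sub hmn.le
  have hn : (0 : ℝ) < n := by exact_mod_cast hm.trans hmn
  have hr : (0 : ℝ) < (n - m : ℕ) := by exact_mod_cast Nat.sub_pos_of_lt hmn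
  have hexp : (n : ℝ) * binEnt (m / n)
      = n * logb 2 n - (m * logb 2 m + (n - m : ℕ) * logb 2 (n - m : ℕ)) := by
    have h1 : 1 - (m : ℝ) / n = (n - m : ℕ) / n := by rw [hsub]; field_simp
    rw [binEnt, h1, logb_div (by positivity) hn.ne', logb_div hr.ne' hn.ne']
    field_simp
    rw [hsub]
    ring
  have hP : (m : ℝ) ^ m * ((n - m : ℕ) : ℝ) ^ (n - m) ≠ 0 := by positivity
  rw [hexp, rpow_sub two_pos, rpow_add two_pos, hpow n (hm.trans hmn), hpow m hm,
    hpow (n - m) (Nat.sub_pos_of_lt hmn), div_mul_cancel₀ _ hP]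

lemma choose_le_two_rpow_mul_binEnt {n m : ℕ} (hm : 0 < m) (hmn : m < n) :
    (n.choose m : ℝ) ≤ 2 ^ (n * binEnt (m / n)) := by
  have hr : (0 : ℝ) < (n - m : ℕ) := by exact_mod_cast Nat.sub_pos_of_lt hmn
  have hP : (0 : ℝ) < (m : ℝ) ^ m * ((n - m : ℕ) : ℝ) ^ (n - m) := by positivity
  refine le_of_mul_le_mul_right ?_ hP
  rw [two_rpow_mul_binEnt_div_mul_pow_mul_pow hm hmn, ← mul_assoc]
  exact_mod_cast binomialTerm_self_le_pow_self hmn.le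

lemma two_rpow_mul_binEnt_le_succ_mul_choose {n m : ℕ} (hm : 0 < m) (hmn : m < n) :
    (2 : ℝ) ^ (n * binEnt (m / n)) ≤ (n + 1) * n.choose m := by
  have hr : (0 : ℝ) < (n - m : ℕ) := by exact_mod_cast Nat.sub_pos_of_lt hmn
  have hP : (0 : ℝ) < (m : ℝ) ^ m * ((n - m : ℕ) : ℝ) ^ (n - m) := by positivity
  refine le_of_mul_le_mul_right ?_ hP
  rw [two_rpow_mul_binEnt_div_mul_pow_mul_pow hm hmn]
  exact_mod_cast (pow_self_le_succ_mul_binomialTerm_self hmn.le).trans_eq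
    (by rw [binomialTerm]; ring)

lemma choose_le_two_rpow_mul_binEnt_of_le {n m : ℕ} {x : ℝ} (hm : 0 < m) (hmn : m < n)
    (hx : (m : ℝ) / n ≤ x) (hx' : x ≤ 2⁻¹) : (n.choose m : ℝ) ≤ 2 ^ (n * binEnt x) := by
  have hmn₀ : (0 : ℝ) ≤ m / n := by positivity
  have hH := binEnt_monotoneOn ⟨hmn₀, hx.trans hx'⟩ ⟨hmn₀.trans hx, hx'⟩ hx
  exact (choose_le_two_rpow_mul_binEnt hm hmn).trans <|
    rpow_le_rpow_of_exponent_le one_le_two (mul_le_mul_of_nonneg_left hH (Nat.cast_nonneg n))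

lemma Nat.choose_le_choose_of_le_of_le_half {n r s : ℕ} (hrs : r ≤ s) (hs : s ≤ n / 2) :
    n.choose r ≤ n.choose s := by
  induction s, hrs using Nat.le_induction with
  | base => rfl
  | succ s _ ih => exact (ih (by omega)).trans (Nat.choose_le_succ_of_lt_half_left (by omega))

lemma card_filter_lt_two_mul_card_inter_le {α : Type*} [Fintype α] [DecidableEq α] {k : ℕ}
    (hk : 2 * k ≤ Fintype.card α) {S : Finset α} (hS : #S = k) :
    #{T ∈ powersetCard k univ | k < 2 * #(S ∩ T)}
      ≤ 2 ^ k * (Fintype.card α - k).choose (k / 2) := by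
  have hsub : {T ∈ powersetCard k (univ : Finset α) | k < 2 * #(S ∩ T)} ⊆
      {A ∈ S.powerset | k < 2 * #A}.biUnion fun A => (Sᶜ.powersetCard (k - #A)).image (A ∪ ·) := by
    intro T hT
    rw [mem_filter, mem_powersetCard_univ] at hT
    refine mem_biUnion.2 ⟨S ∩ T, mem_filter.2 ⟨mem_powerset.2 inter_subset_left, hT.2⟩,
      mem_image.2 ⟨T \ S, mem_powersetCard.2 ⟨fun x hx => ?_, ?_⟩, ?_⟩⟩
    · simpa using (mem_sdiff.1 hx).2
    · rw [← hT.1, ← card_sdiff_add_card_inter T S, inter_comm, Nat.add_sub_cancel]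
    · rw [inter_comm, union_comm, sdiff_union_inter]
  calc _ ≤ _ := card_le_card hsub
    _ ≤ #{A ∈ S.powerset | k < 2 * #A} * (Fintype.card α - k).choose (k / 2) :=
        card_biUnion_le_card_mul _ _ _ fun A hA => by
          rw [mem_filter] at hA
          refine card_image_le.trans ?_
          rw [card_powersetCard, card_compl, hS]
          exact Nat.choose_le_choose_of_le_of_le_half (by omega) (by omega)
    _ ≤ 2 ^ k * (Fintype.card α - k).choose (k / 2) := by
        gcongr
        exact (card_filter_le _ _).trans_eq (by rw [card_powerset, hS])

lemma Finset.exists_subset_card_eq_pairwise_of_mul_lt_card {ι : Type*} [DecidableEq ι]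
    {U : Finset ι} {c : ι → ι → Prop} [DecidableRel c] (hsymm : ∀ x y, c x y → c y x)
    (hirrefl : ∀ x ∈ U, ¬ c x x) {B : ℕ} (hB : ∀ x ∈ U, #{y ∈ U | ¬ c x y} ≤ B) :
    ∀ M : ℕ, M * B < #U → ∃ F ⊆ U, #F = M ∧ (F : Set ι).Pairwise c := by
  intro M
  induction M with
  | zero => exact fun _ => ⟨∅, empty_subset U, rfl, by simp⟩
  | succ M ih =>
    intro hM
    obtain ⟨F, hFU, hFM, hF⟩ := ih (lt_of_le_of_lt (Nat.mul_le_mul_right B M.le_succ) hM)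
    have hbad : #(F.biUnion fun x => {y ∈ U | ¬ c x y}) < #U :=
      calc _ ≤ #F * B := card_biUnion_le_card_mul _ _ _ fun x hx => hB x (hFU hx)
        _ < #U := by rw [hFM]; exact lt_of_le_of_lt (Nat.mul_le_mul_right B M.le_succ) hM
    obtain ⟨T, hTU, hT⟩ := exists_mem_notMem_of_card_lt_card hbad
    simp only [mem_biUnion, mem_filter, not_exists, not_and, not_not] at hT
    have hTF : T ∉ F := fun h => hirrefl T hTU (hT T h hTU)
    refine ⟨insert T F, insert_subset hTU hFU, by rw [card_insert_of_notMem hTF, hFM], ?_⟩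
    rw [coe_insert, Set.pairwise_insert]
    exact ⟨hF, fun x hx _ => ⟨hsymm _ _ (hT x hx hTU), hT x hx hTU⟩⟩

lemma exists_family_card_eq_two_mul_card_inter_le {α : Type*} [Fintype α] [DecidableEq α]
    {k M : ℕ} (hk : 0 < k) (hkα : 2 * k ≤ Fintype.card α)
    (hM : M * (2 ^ k * (Fintype.card α - k).choose (k / 2)) < (Fintype.card α).choose k) :
    ∃ 𝒮 : Finset (Finset α), #𝒮 = M ∧ (∀ S ∈ 𝒮, #S = k) ∧
      (𝒮 : Set (Finset α)).Pairwise fun S T => 2 * #(S ∩ T) ≤ k := by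
  obtain ⟨𝒮, h𝒮, hcard, hpair⟩ :=
    exists_subset_card_eq_pairwise_of_mul_lt_card (U := powersetCard k (univ : Finset α))
      (c := fun S T => 2 * #(S ∩ T) ≤ k) (fun S T h => by simpa only [inter_comm] using h)
      (fun T hT => by rw [mem_powersetCard_univ] at hT; rw [inter_self, hT]; omega)
      (fun S hS => by
        simpa only [not_le] using
          card_filter_lt_two_mul_card_inter_le hkα (mem_powersetCard_univ.1 hS))
      M (by rwa [card_powersetCard, card_univ])
  exact ⟨𝒮, hcard, fun S hS => mem_powersetCard_univ.1 (h𝒮 hS), hpair⟩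

open Asymptotics in
lemma eventually_mul_add_one_lt_two_rpow (a : ℝ) {c : ℝ} (hc : 0 < c) :
    ∀ᶠ k : ℕ in atTop, a * k + 1 < (2 : ℝ) ^ (c * k) := by
  have hr : 1 < (2 : ℝ) ^ c := one_lt_rpow one_lt_two hc
  have hlin : (fun k : ℕ => a * k + 1) =o[atTop] fun k => ((2 : ℝ) ^ c) ^ k :=
    ((isLittleO_coe_const_pow_of_one_lt hr).const_mul_left a).add <|
      (isLittleO_one_left_iff ℝ).2 <| by
        simpa only [norm_pow, Real.norm_of_nonneg (rpow_nonneg zero_le_two c)] using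
          tendsto_pow_atTop_atTop_of_one_lt hr
  filter_upwards [hlin.def one_half_pos] with k hk
  rw [rpow_mul zero_le_two, rpow_natCast]
  have hpos : 0 < ((2 : ℝ) ^ c) ^ k := by positivity
  rw [norm_of_nonneg hpos.le] at hk
  calc a * k + 1 ≤ ‖a * k + 1‖ := le_norm_self _
    _ ≤ 1 / 2 * ((2 : ℝ) ^ c) ^ k := hk
    _ < ((2 : ℝ) ^ c) ^ k := by linarith

lemma floor_two_rpow_mul_lt_choose {α k : ℕ} {β : ℝ} (hα : 2 ≤ α) (hk : 2 ≤ k)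
    (hpoly : (α : ℝ) * k + 1 < 2 ^ ((α * binEnt (1 / α)
      - (α - 1) * binEnt (1 / (2 * (α - 1))) - 1 - β) * k)) :
    ⌊(2 : ℝ) ^ (β * k)⌋₊ * (2 ^ k * (α * k - k).choose (k / 2)) < (α * k).choose k := by
  set H₁ := binEnt (1 / α)
  set H₂ := binEnt (1 / (2 * ((α : ℝ) - 1)))
  have hα' : (1 : ℝ) ≤ α - 1 := by
    have : (2 : ℝ) ≤ α := by exact_mod_cast hα
    linarith
  have hkR : (0 : ℝ) < k := by positivity
  have hkαk : k ≤ α * k - k := by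
    rw [← Nat.sub_one_mul]; exact Nat.le_mul_of_pos_left k (by omega)
  have hcast : ((α * k - k : ℕ) : ℝ) = (α - 1) * k := by
    rw [← Nat.sub_one_mul]; push_cast [Nat.one_le_of_lt hα]; ring
  have hsmall : (((α * k - k).choose (k / 2) : ℕ) : ℝ) ≤ 2 ^ ((α - 1) * k * H₂) := by
    rw [← hcast]
    refine choose_le_two_rpow_mul_binEnt_of_le (by omega) (by omega) ?_ ?_
    · rw [hcast, div_le_div_iff₀ (by positivity) (by positivity)]
      have : ((k / 2 : ℕ) : ℝ) ≤ k / 2 := Nat.cast_div_le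
      nlinarith
    · rw [one_div, mul_comm]
      exact inv_anti₀ two_pos (by linarith)
  have hbig : (2 : ℝ) ^ (α * k * H₁) ≤ (α * k + 1) * (α * k).choose k := by
    have h := two_rpow_mul_binEnt_le_succ_mul_choose (m := k) (n := α * k) (by omega)
      (lt_of_lt_of_le (by omega) (Nat.mul_le_mul_right k hα))
    rwa [Nat.cast_mul, mul_comm (α : ℝ) k, ← div_div, div_self hkR.ne', mul_comm (k : ℝ) α] at h
  have hfloor : (⌊(2 : ℝ) ^ (β * k)⌋₊ : ℝ) ≤ 2 ^ (β * k) := Nat.floor_le (by positivity)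
  suffices h : (⌊(2 : ℝ) ^ (β * k)⌋₊ : ℝ) * (2 ^ k * (α * k - k).choose (k / 2))
      < (α * k).choose k by exact_mod_cast h
  calc (⌊(2 : ℝ) ^ (β * k)⌋₊ : ℝ) * (2 ^ k * (α * k - k).choose (k / 2))
      ≤ 2 ^ (β * k) * (2 ^ (k : ℝ) * 2 ^ ((α - 1) * k * H₂)) := by
        rw [rpow_natCast]; gcongr
    _ = 2 ^ (α * k * H₁) / 2 ^ ((α * H₁ - (α - 1) * H₂ - 1 - β) * k) := by
        rw [← rpow_add two_pos, ← rpow_add two_pos, ← rpow_sub two_pos]; ring_nf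
    _ < 2 ^ (α * k * H₁) / (α * k + 1) := by gcongr
    _ ≤ (α * k).choose k := (div_le_iff₀' (by positivity)).2 hbig

/-- Existence of a `(k, α, β)`-set: a family of `2^{βk}` subsets of `{1,…,αk}`,
each of size `k`, with pairwise intersections of size at most `k/2`. -/
theorem stmt0 (α : ℕ) (hα : 2 ≤ α) (β : ℝ) (hβ0 : 0 < β)
    (hβ : β < (1 / 2) * ((α : ℝ) * binEnt (1 / (α : ℝ))
        - ((α : ℝ) - 1) * binEnt (1 / (2 * ((α : ℝ) - 1))) - 1)) :
    ∃ k₀ : ℕ, ∀ k : ℕ, k₀ ≤ k →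
      ∃ 𝒮 : Finset (Finset (Fin (α * k))),
        (∀ S ∈ 𝒮, S.card = k) ∧
        𝒮.card = ⌊(2 : ℝ) ^ (β * k)⌋₊ ∧
        ∀ S ∈ 𝒮, ∀ S' ∈ 𝒮, S ≠ S' → ((S ∩ S').card : ℝ) ≤ (k : ℝ) / 2 := by
  have hgap : 0 < (α : ℝ) * binEnt (1 / α) - (α - 1) * binEnt (1 / (2 * (α - 1))) - 1 - β := by
    linarith
  obtain ⟨k₀, hk₀⟩ := eventually_atTop.1 <|
    (eventually_mul_add_one_lt_two_rpow α hgap).and (eventually_ge_atTop 2)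
  refine ⟨k₀, fun k hk => ?_⟩
  obtain ⟨hpoly, hk2⟩ := hk₀ k hk
  have hcard : Fintype.card (Fin (α * k)) = α * k := Fintype.card_fin _
  obtain ⟨𝒮, h𝒮, hsize, hpair⟩ :=
    exists_family_card_eq_two_mul_card_inter_le (α := Fin (α * k)) (by omega)
      (hcard ▸ Nat.mul_le_mul_right k hα) (hcard ▸ floor_two_rpow_mul_lt_choose hα hk2 hpoly)
  refine ⟨𝒮, hsize, h𝒮, fun S hS S' hS' hne => ?_⟩
  rw [le_div_iff₀ two_pos, mul_comm]
  exact_mod_cast hpair hS hS' hne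
end

section
/- Let α ≥ 2 be an integer and k ≥ 2 an even integer. Then for every integer l with k/2 < l ≤ k, one has (k choose l)·((α−1)·k choose (k − l)) < (k choose k/2)·((α−1)·k choose k/2). -/
lemma choose_mono_half {n : ℕ} : ∀ {a b : ℕ}, a ≤ b → b ≤ n / 2 →
    Nat.choose n a ≤ Nat.choose n b := by
  intro a b hab hb
  induction b with
  | zero => simp [Nat.le_zero.mp hab]
  | succ b ih =>
    rcases Nat.lt_or_ge a (b + 1) with h | h
    · exact le_trans (ih (Nat.lt_succ_iff.mp h) (le_trans (Nat.le_succ b) hb))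
        (Nat.choose_le_succ_of_lt_half_left (lt_of_lt_of_le (Nat.lt_succ_self b) hb))
    · have : a = b + 1 := le_antisymm hab h
      subst this; rfl

lemma choose_strict_half {n a : ℕ} (ha : a < n / 2) :
    Nat.choose n a < Nat.choose n (a + 1) := by
  have h2 : 2 * (a + 1) ≤ n := by
    have := Nat.div_mul_le_self n 2
    omega
  have hp : 0 < Nat.choose n a := Nat.choose_pos (by omega)
  have key := Nat.choose_succ_right_eq n a
  have hlt : Nat.choose n a * (a + 1) < Nat.choose n a * (n - a) :=
    Nat.mul_lt_mul_of_pos_left (by omega) hp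
  rw [← key] at hlt
  exact Nat.lt_of_mul_lt_mul_right hlt

/-- For an even `k ≥ 2`, an integer `α ≥ 2`, and `k/2 < l ≤ k`:
`C(k,l)·C((α−1)k, k−l) < C(k,k/2)·C((α−1)k, k/2)`. -/
theorem stmt2 (α k : ℕ) (hα : 2 ≤ α) (hk : 2 ≤ k) (hke : Even k)
    (l : ℕ) (hl1 : k / 2 < l) (hl2 : l ≤ k) :
    Nat.choose k l * Nat.choose ((α - 1) * k) (k - l)
      < Nat.choose k (k / 2) * Nat.choose ((α - 1) * k) (k / 2) := by
  set n := (α - 1) * k with hn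
  have hkn : k ≤ n := by
    calc k = 1 * k := (one_mul k).symm
    _ ≤ (α - 1) * k := Nat.mul_le_mul_right k (by omega)
  have hhalf : k / 2 ≤ n / 2 := Nat.div_le_div_right hkn
  obtain ⟨m, hm⟩ := hke
  have hkl : k - l < k / 2 := by omega
  have hB : Nat.choose n (k - l) < Nat.choose n (k / 2) :=
    lt_of_lt_of_le (choose_strict_half (lt_of_lt_of_le hkl hhalf))
      (choose_mono_half (by omega) hhalf)
  calc Nat.choose k l * Nat.choose n (k - l)
      ≤ Nat.choose k (k / 2) * Nat.choose n (k - l) :=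
        Nat.mul_le_mul_right _ (Nat.choose_le_middle l k)
    _ < Nat.choose k (k / 2) * Nat.choose n (k / 2) :=
        Nat.mul_lt_mul_of_pos_left hB (Nat.choose_pos (by omega))
end

section
/- Let α ≥ 2 be an integer and k ≥ 2 an even integer. Then (k choose k/2)·((α−1)·k choose k/2) ≤ (α·k + 1)·2^{k + (α−1)·k·H(1/(2(α−1))) − α·k·H(1/α)}·(α·k choose k), where the exponent is a real number and the inequality is between real numbers. -/
open Finset Real


private def tTerm (n m j : ℕ) : ℕ := n.choose j * m ^ j * (n - m) ^ (n - j)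

lemma tTerm_sum (n m : ℕ) (h : m ≤ n) :
    ∑ j ∈ range (n + 1), tTerm n m j = n ^ n := by
  have key := add_pow (R := ℕ) m (n - m) n
  rw [Nat.add_sub_cancel' h] at key
  rw [key]
  refine Finset.sum_congr rfl fun j hj => ?_
  simp [tTerm]; ring

lemma tTerm_step_down (n m j : ℕ) (hm : m ≤ j) :
    tTerm n m (j + 1) ≤ tTerm n m j := by
  rcases le_or_gt n j with h | h
  · unfold tTerm
    rw [Nat.choose_eq_zero_of_lt (by omega)]
    simp
  · obtain ⟨c, hc⟩ : ∃ c, n - j = c + 1 := ⟨n - j - 1, by omega⟩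
    have hc2 : n - (j + 1) = c := by omega
    refine Nat.le_of_mul_le_mul_right ?_ (Nat.succ_pos j)
    calc tTerm n m (j + 1) * (j + 1)
        = (n.choose (j+1) * (j+1)) * (m ^ j * m) * (n - m) ^ c := by
          unfold tTerm; rw [hc2, pow_succ]; ring
      _ = (n.choose j * (n - j)) * (m ^ j * m) * (n - m) ^ c := by
          rw [Nat.choose_succ_right_eq]
      _ = (n.choose j * m ^ j * (n - m) ^ c) * ((n - j) * m) := by ring
      _ ≤ (n.choose j * m ^ j * (n - m) ^ c) * ((n - m) * (j + 1)) := by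
          exact Nat.mul_le_mul_left _ (Nat.mul_le_mul (by omega) (by omega))
      _ = tTerm n m j * (j + 1) := by unfold tTerm; rw [hc, pow_succ]; ring

lemma tTerm_step_up (n m j : ℕ) (hj : j < m) (hm : m ≤ n) :
    tTerm n m j ≤ tTerm n m (j + 1) := by
  obtain ⟨c, hc⟩ : ∃ c, n - j = c + 1 := ⟨n - j - 1, by omega⟩
  have hc2 : n - (j + 1) = c := by omega
  refine Nat.le_of_mul_le_mul_right ?_ (Nat.succ_pos j)
  calc tTerm n m j * (j + 1)
      = (n.choose j * m ^ j * (n - m) ^ c) * ((n - m) * (j + 1)) := by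
        unfold tTerm; rw [hc, pow_succ]; ring
    _ ≤ (n.choose j * m ^ j * (n - m) ^ c) * ((n - j) * m) := by
        exact Nat.mul_le_mul_left _ (Nat.mul_le_mul (by omega) (by omega))
    _ = (n.choose j * (n - j)) * (m ^ j * m) * (n - m) ^ c := by ring
    _ = (n.choose (j+1) * (j+1)) * (m ^ j * m) * (n - m) ^ c := by
        rw [Nat.choose_succ_right_eq]
    _ = tTerm n m (j + 1) * (j + 1) := by
        unfold tTerm; rw [hc2, pow_succ]; ring

lemma tTerm_le (n m j : ℕ) (hm : m ≤ n) : tTerm n m j ≤ tTerm n m m := by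
  rcases le_or_gt m j with h | h
  · obtain ⟨d, rfl⟩ := Nat.exists_eq_add_of_le h
    clear h
    induction d with
    | zero => simp
    | succ d ih => exact le_trans (tTerm_step_down n m (m + d) (by omega)) ih
  · have key : ∀ i, tTerm n m (m - i) ≤ tTerm n m m := by
      intro i
      induction i with
      | zero => simp
      | succ i ih =>
          rcases eq_or_lt_of_le (Nat.sub_le_sub_left (Nat.le_succ i) m) with he | hlt
          · rw [he]; exact ih
          · have h1 : m - (i + 1) + 1 = m - i := by omega
            have h2 : m - (i + 1) < m := by omega
            calc tTerm n m (m - (i + 1)) ≤ tTerm n m (m - (i + 1) + 1) :=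
                  tTerm_step_up n m _ (by omega) hm
              _ = tTerm n m (m - i) := by rw [h1]
              _ ≤ tTerm n m m := ih
    have : j = m - (m - j) := by omega
    rw [this]; exact key _

lemma key_upper (n m : ℕ) (h : m ≤ n) :
    n.choose m * m ^ m * (n - m) ^ (n - m) ≤ n ^ n := by
  rw [← tTerm_sum n m h]
  exact Finset.single_le_sum (f := tTerm n m) (fun i _ => Nat.zero_le _)
    (Finset.mem_range.mpr (by omega))

lemma key_lower (n m : ℕ) (h : m ≤ n) :
    n ^ n ≤ (n + 1) * (n.choose m * m ^ m * (n - m) ^ (n - m)) := by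
  rw [← tTerm_sum n m h]
  calc ∑ j ∈ range (n + 1), tTerm n m j ≤ ∑ _j ∈ range (n + 1), tTerm n m m :=
        Finset.sum_le_sum fun j _ => tTerm_le n m j h
    _ = (n + 1) * tTerm n m m := by rw [Finset.sum_const, card_range, smul_eq_mul]

lemma ent_eq (a b : ℝ) (h0 : 0 < a) (h1 : a < b) :
    (2:ℝ) ^ (b * binEnt (a / b)) = b ^ b / (a ^ a * (b - a) ^ (b - a)) := by
  have hb : (0:ℝ) < b := h0.trans h1
  have hba : (0:ℝ) < b - a := by linarith
  have habpos : 0 < a / b := div_pos h0 hb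
  have h1ab : 1 - a / b = (b - a) / b := by field_simp
  have hpos : (0:ℝ) < b ^ b / (a ^ a * (b - a) ^ (b - a)) := by positivity
  rw [← Real.rpow_logb (b := 2) (two_pos) (by norm_num) hpos]
  congr 1
  rw [Real.logb, Real.log_div (by positivity) (by positivity),
    Real.log_mul (by positivity) (by positivity),
    Real.log_rpow hb, Real.log_rpow h0, Real.log_rpow hba]
  rw [binEnt, h1ab, Real.logb, Real.logb,
    Real.log_div (ne_of_gt h0) (ne_of_gt hb),
    Real.log_div (ne_of_gt hba) (ne_of_gt hb)]
  have hl2 : Real.log 2 ≠ 0 := ne_of_gt (Real.log_pos (by norm_num))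
  field_simp
  ring

lemma choose_upper_real (n m : ℕ) (h0 : 0 < m) (h1 : m < n) :
    (n.choose m : ℝ) ≤ (2:ℝ) ^ ((n:ℝ) * binEnt ((m:ℝ) / n)) := by
  have hnm : ((n - m : ℕ) : ℝ) = (n:ℝ) - m := Nat.cast_sub h1.le
  rw [ent_eq _ _ (by exact_mod_cast h0) (by exact_mod_cast h1),
    le_div_iff₀ (mul_pos (Real.rpow_pos_of_pos (by exact_mod_cast h0) _)
      (Real.rpow_pos_of_pos (sub_pos.mpr (by exact_mod_cast h1)) _))]
  calc (n.choose m : ℝ) * ((m:ℝ) ^ (m:ℝ) * ((n:ℝ) - m) ^ ((n:ℝ) - m))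
      = ((n.choose m * m ^ m * (n - m) ^ (n - m) : ℕ) : ℝ) := by
        rw [← hnm, Real.rpow_natCast, Real.rpow_natCast]; push_cast; ring
    _ ≤ ((n ^ n : ℕ) : ℝ) := by exact_mod_cast key_upper n m h1.le
    _ = (n:ℝ) ^ (n:ℝ) := by rw [Real.rpow_natCast]; push_cast; ring

lemma choose_lower_real (n m : ℕ) (h0 : 0 < m) (h1 : m < n) :
    (2:ℝ) ^ ((n:ℝ) * binEnt ((m:ℝ) / n)) ≤ ((n:ℝ) + 1) * n.choose m := by
  have hnm : ((n - m : ℕ) : ℝ) = (n:ℝ) - m := Nat.cast_sub h1.le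
  rw [ent_eq _ _ (by exact_mod_cast h0) (by exact_mod_cast h1),
    div_le_iff₀ (mul_pos (Real.rpow_pos_of_pos (by exact_mod_cast h0) _)
      (Real.rpow_pos_of_pos (sub_pos.mpr (by exact_mod_cast h1)) _))]
  calc (n:ℝ) ^ (n:ℝ) = ((n ^ n : ℕ) : ℝ) := by rw [Real.rpow_natCast]; push_cast; ring
    _ ≤ (((n + 1) * (n.choose m * m ^ m * (n - m) ^ (n - m)) : ℕ) : ℝ) := by
        exact_mod_cast key_lower n m h1.le
    _ = ((n:ℝ) + 1) * (n.choose m) * ((m:ℝ) ^ (m:ℝ) * ((n:ℝ) - m) ^ ((n:ℝ) - m)) := by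
        rw [← hnm, Real.rpow_natCast, Real.rpow_natCast]; push_cast; ring

/-- For an even `k ≥ 2` and an integer `α ≥ 2`:
`C(k,k/2)·C((α−1)k, k/2) ≤ (αk+1)·2^{k + (α−1)k·H(1/(2(α−1))) − αk·H(1/α)}·C(αk, k)`
as real numbers. -/
theorem stmt4 (α k : ℕ) (hα : 2 ≤ α) (hk : 2 ≤ k) (hke : Even k) :
    (Nat.choose k (k / 2) : ℝ) * (Nat.choose ((α - 1) * k) (k / 2) : ℝ)
      ≤ ((α : ℝ) * k + 1) *
        (2 : ℝ) ^ ((k : ℝ) + ((α : ℝ) - 1) * k * binEnt (1 / (2 * ((α : ℝ) - 1)))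
            - (α : ℝ) * k * binEnt (1 / (α : ℝ))) *
        (Nat.choose (α * k) k : ℝ) := by
  have hα1 : 1 ≤ α := by omega
  have hk2 : k / 2 * 2 = k := Nat.div_mul_cancel hke.two_dvd
  have hcα : ((α - 1 : ℕ) : ℝ) = (α:ℝ) - 1 := by
    push_cast [Nat.cast_sub hα1]; ring
  have hc2 : ((k / 2 : ℕ) : ℝ) = (k:ℝ) / 2 := by
    have : ((k / 2 : ℕ) : ℝ) * 2 = (k : ℝ) := by exact_mod_cast hk2
    linarith
  have hαR : (2:ℝ) ≤ (α:ℝ) := by exact_mod_cast hα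
  have hkR : (2:ℝ) ≤ (k:ℝ) := by exact_mod_cast hk
  -- bound A
  have hA : (k.choose (k / 2) : ℝ) ≤ (2:ℝ) ^ ((k:ℝ)) := by
    rw [Real.rpow_natCast]
    have : k.choose (k / 2) ≤ 2 ^ k := by
      calc k.choose (k / 2) ≤ ∑ i ∈ range (k + 1), k.choose i :=
            Finset.single_le_sum (fun i _ => Nat.zero_le _) (mem_range.mpr (by omega))
        _ = 2 ^ k := Nat.sum_range_choose k
    exact_mod_cast this
  -- bound B
  have hm1lt : k / 2 < (α - 1) * k := by
    have : 1 * k ≤ (α - 1) * k := Nat.mul_le_mul_right k (by omega)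
    omega
  have hB := choose_upper_real ((α - 1) * k) (k / 2) (by omega) hm1lt
  have hexp1 : (((α - 1) * k : ℕ) : ℝ) = ((α:ℝ) - 1) * k := by
    push_cast [hcα]; ring
  have harg1 : ((k / 2 : ℕ) : ℝ) / (((α - 1) * k : ℕ) : ℝ) = 1 / (2 * ((α:ℝ) - 1)) := by
    rw [hexp1, hc2]
    have h1 : (α:ℝ) - 1 ≠ 0 := by linarith
    have h2 : (k:ℝ) ≠ 0 := by linarith
    field_simp
  rw [harg1, hexp1] at hB
  -- bound C
  have hm2lt : k < α * k := by
    have : 2 * k ≤ α * k := Nat.mul_le_mul_right k hα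
    omega
  have hC := choose_lower_real (α * k) k (by omega) hm2lt
  have hexp2 : ((α * k : ℕ) : ℝ) = (α:ℝ) * k := by push_cast; ring
  have harg2 : ((k : ℕ) : ℝ) / ((α * k : ℕ) : ℝ) = 1 / (α:ℝ) := by
    rw [hexp2]
    have h2 : (k:ℝ) ≠ 0 := by linarith
    field_simp
  rw [harg2, hexp2] at hC
  set X := ((α:ℝ) - 1) * k * binEnt (1 / (2 * ((α:ℝ) - 1))) with hX
  set Y := (α:ℝ) * k * binEnt (1 / (α:ℝ)) with hY
  calc (k.choose (k / 2) : ℝ) * (((α - 1) * k).choose (k / 2) : ℝ)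
      ≤ (2:ℝ) ^ ((k:ℝ)) * (2:ℝ) ^ X := by
        exact mul_le_mul hA hB (Nat.cast_nonneg _) (by positivity)
    _ = (2:ℝ) ^ ((k:ℝ) + X - Y) * (2:ℝ) ^ Y := by
        rw [← Real.rpow_add two_pos, ← Real.rpow_add two_pos]; ring_nf
    _ ≤ (2:ℝ) ^ ((k:ℝ) + X - Y) * (((α:ℝ) * k + 1) * ((α * k).choose k : ℝ)) := by
        exact mul_le_mul_of_nonneg_left hC (by positivity)
    _ = ((α : ℝ) * k + 1) * (2:ℝ) ^ ((k:ℝ) + X - Y) * ((α * k).choose k : ℝ) := by ring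
end

section
/- (Yao's principle, Monte Carlo version.) Let A and X be nonempty finite types, c : A × X → ℝ a nonnegative cost function, and mistake : A × X → Prop a decidable predicate. Let δ > 0. Suppose ρ is a probability mass function on A such that for every x ∈ X the ρ-probability of {a : mistake (a, x)} is at most δ, and let d be any probability mass function on X. Then there exists a ∈ A such that the d-probability of {x : mistake (a, x)} is at most 2δ, and the maximum over x ∈ X of the ρ-expectation of a' ↦ c (a', x) is at least (1/2)·(the d-expectation of x ↦ c (a, x)). -/
/-! Averaging over `d`, the randomized algorithm `ρ` has expected mistake probability at most
`δ` and expected `d`-average cost at most the worst-case expected cost `T`. By Markov's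
inequality each of the events `2δ < error` and `2T < cost` has `ρ`-probability strictly below
`1/2`, so some deterministic algorithm avoids both. -/

open Finset

theorem PMF.sum_toReal_eq_one {α : Type*} [Fintype α] (p : PMF α) : ∑ a, (p a).toReal = 1 := by
  rw [← ENNReal.toReal_sum fun a _ => p.apply_ne_top a, ← tsum_fintype (L := .unconditional _),
    p.tsum_coe, ENNReal.toReal_one]

section Averaging

variable {ι κ : Type*} [Fintype ι] [Fintype κ] {w : ι → ℝ}

theorem sum_mul_sum_mul_le_of_forall_sum_mul_le {v : κ → ℝ} (hv : ∀ j, 0 ≤ v j)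
    (hv1 : ∑ j, v j = 1) {F : ι → κ → ℝ} {B : ℝ} (hF : ∀ j, ∑ i, w i * F i j ≤ B) :
    ∑ i, w i * ∑ j, v j * F i j ≤ B :=
  calc ∑ i, w i * ∑ j, v j * F i j = ∑ j, v j * ∑ i, w i * F i j := by
        simp_rw [mul_sum]
        rw [sum_comm]
        exact sum_congr rfl fun _ _ => sum_congr rfl fun _ _ => by ring
    _ ≤ ∑ j, v j * B := sum_le_sum fun j _ => mul_le_mul_of_nonneg_left (hF j) (hv j)
    _ = B := by rw [← sum_mul, hv1, one_mul]

theorem sum_filter_two_mul_lt_lt_half (hw : ∀ i, 0 ≤ w i) {g : ι → ℝ} (hg : ∀ i, 0 ≤ g i)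
    {β : ℝ} (h : ∑ i, w i * g i ≤ β) : ∑ i with 2 * β < g i, w i < 1 / 2 := by
  set U := univ.filter fun i => 2 * β < g i
  have hβ : 0 ≤ β := (sum_nonneg fun i _ => mul_nonneg (hw i) (hg i)).trans h
  rcases (sum_nonneg fun i _ => hw i : 0 ≤ ∑ i ∈ U, w i).eq_or_lt with hzero | hpos
  · rw [← hzero]
    norm_num
  obtain ⟨i₀, hi₀U, hi₀⟩ : ∃ i ∈ U, 0 < w i :=
    exists_lt_of_sum_lt (by rwa [sum_const_zero])
  have hstrict : 2 * β * ∑ i ∈ U, w i < β :=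
    calc 2 * β * ∑ i ∈ U, w i = ∑ i ∈ U, w i * (2 * β) := by rw [mul_sum]; simp_rw [mul_comm]
      _ < ∑ i ∈ U, w i * g i := by
        refine sum_lt_sum (fun i hi => ?_) ⟨i₀, hi₀U, ?_⟩
        · exact mul_le_mul_of_nonneg_left (mem_filter.1 hi).2.le (hw i)
        · exact mul_lt_mul_of_pos_left (mem_filter.1 hi₀U).2 hi₀
      _ ≤ ∑ i, w i * g i :=
        sum_le_sum_of_subset_of_nonneg (subset_univ U) fun i _ _ => mul_nonneg (hw i) (hg i)
      _ ≤ β := h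
  nlinarith

theorem exists_le_two_mul_and_le_two_mul (hw : ∀ i, 0 ≤ w i) (hw1 : ∑ i, w i = 1)
    {f g : ι → ℝ} (hf : ∀ i, 0 ≤ f i) (hg : ∀ i, 0 ≤ g i) {α β : ℝ}
    (hfα : ∑ i, w i * f i ≤ α) (hgβ : ∑ i, w i * g i ≤ β) :
    ∃ i, f i ≤ 2 * α ∧ g i ≤ 2 * β := by
  by_contra! hbad
  have hcover : ∑ i, w i ≤ ∑ i with 2 * α < f i, w i + ∑ i with 2 * β < g i, w i := by
    rw [sum_filter, sum_filter, ← sum_add_distrib]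
    refine sum_le_sum fun i _ => ?_
    split_ifs with hfi hgi hgi
    · linarith [hw i]
    · linarith
    · linarith
    · exact absurd (hbad i (not_lt.1 hfi)) hgi
  linarith [sum_filter_two_mul_lt_lt_half hw hf hfα, sum_filter_two_mul_lt_lt_half hw hg hgβ]

end Averaging

theorem stmt5_general {A X : Type*} [Fintype A] [Fintype X]
    (c : A × X → ℝ) (hc : ∀ p, 0 ≤ c p)
    (mistake : A × X → Prop) [DecidablePred mistake]
    (δ : ℝ)
    (ρ : PMF A) (d : PMF X)
    (hρ : ∀ x : X, (∑ a : A, if mistake (a, x) then (ρ a).toReal else 0) ≤ δ) :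
    ∃ a : A,
      (∑ x : X, if mistake (a, x) then (d x).toReal else 0) ≤ 2 * δ ∧
      (⨆ x : X, ∑ a' : A, (ρ a').toReal * c (a', x))
        ≥ (1 / 2) * ∑ x : X, (d x).toReal * c (a, x) := by
  set T := ⨆ x : X, ∑ a' : A, (ρ a').toReal * c (a', x)
  have hρ0 : ∀ a, 0 ≤ (ρ a).toReal := fun _ => ENNReal.toReal_nonneg
  have hd0 : ∀ x, 0 ≤ (d x).toReal := fun _ => ENNReal.toReal_nonneg
  have hmistake : ∑ a, (ρ a).toReal * ∑ x, (if mistake (a, x) then (d x).toReal else 0) ≤ δ := by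
    simpa only [mul_boole] using sum_mul_sum_mul_le_of_forall_sum_mul_le hd0 d.sum_toReal_eq_one
      (F := fun a x => if mistake (a, x) then 1 else 0) (by simpa only [mul_boole] using hρ)
  have hcost : ∑ a, (ρ a).toReal * ∑ x, (d x).toReal * c (a, x) ≤ T :=
    sum_mul_sum_mul_le_of_forall_sum_mul_le hd0 d.sum_toReal_eq_one
      fun x => le_ciSup (f := fun x => ∑ a, (ρ a).toReal * c (a, x)) (Set.finite_range _).bddAbove x
  obtain ⟨a, ha_mistake, ha_cost⟩ := exists_le_two_mul_and_le_two_mul hρ0 ρ.sum_toReal_eq_one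
    (fun a => sum_nonneg fun x _ => by split_ifs <;> simp [hd0 x])
    (fun a => sum_nonneg fun x _ => mul_nonneg (hd0 x) (hc _)) hmistake hcost
  exact ⟨a, ha_mistake, by linarith⟩

/-- Yao's principle (Monte Carlo version). If a randomized algorithm (a PMF `ρ` over
deterministic algorithms `A`) errs with probability at most `δ` on every input, then
for any input distribution `d` there is a deterministic algorithm `a` erring on at
most a `2δ` fraction of inputs (w.r.t. `d`) whose `d`-average cost is at most twice
the worst-case expected cost of the randomized algorithm. -/
theorem stmt5 {A X : Type*} [Fintype A] [Fintype X] [Nonempty A] [Nonempty X]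
    (c : A × X → ℝ) (hc : ∀ p, 0 ≤ c p)
    (mistake : A × X → Prop) [DecidablePred mistake]
    (δ : ℝ) (hδ : 0 < δ)
    (ρ : PMF A) (d : PMF X)
    (hρ : ∀ x : X, (∑ a : A, if mistake (a, x) then (ρ a).toReal else 0) ≤ δ) :
    ∃ a : A,
      (∑ x : X, if mistake (a, x) then (d x).toReal else 0) ≤ 2 * δ ∧
      (⨆ x : X, ∑ a' : A, (ρ a').toReal * c (a', x))
        ≥ (1 / 2) * ∑ x : X, (d x).toReal * c (a, x) :=
  stmt5_general c hc mistake δ ρ d hρ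
end

section
/- Let V be a finite type, let (ξ_v)_{v ∈ V} be independent random variables on a probability space, each taking values in {0, 1} with P(ξ_v = 1) = q for a fixed q ∈ [0, 1]. Let E be a Finset of Finsets of V with every e ∈ E of cardinality p, let d_v := the number of e ∈ E with v ∈ e, and let X := Σ_{e ∈ E} Π_{v ∈ e} ξ_v. Then Var(X) ≤ |E|·(q^p − q^{2p}) + (Σ_{v ∈ V} d_v·(d_v − 1))·q^{p+1}. -/
/-!
Write `ξ_e = ∏_{v ∈ e} ξ_v`. Expanding the square,
`Var X = ∑_{(e,f) ∈ E × E} (𝔼[ξ_e ξ_f] - 𝔼[ξ_e] 𝔼[ξ_f])`. Since `ξ_v² = ξ_v` we have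
`ξ_e ξ_f = ξ_{e ∪ f}`, so by independence the summand is `q^|e ∪ f| - q^{2p}`. Diagonal pairs give
`q^p - q^{2p}`, disjoint pairs give `0`, and distinct intersecting pairs have `|e ∪ f| ≥ p + 1`,
so they give at most `q^{p+1}`. Each such ordered pair shares some vertex `v`, and `v` lies in
exactly `d_v (d_v - 1)` ordered pairs of distinct edges.
-/

open MeasureTheory ProbabilityTheory Finset

namespace Finset

theorem prod_mul_prod_eq_prod_union_of_isIdempotentElem {ι M : Type*} [CommMonoid M]
    [DecidableEq ι] {f : ι → M} (hf : ∀ i, IsIdempotentElem (f i)) (s t : Finset ι) :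
    (∏ i ∈ s, f i) * ∏ i ∈ t, f i = ∏ i ∈ s ∪ t, f i := by
  have hinter : IsIdempotentElem (∏ i ∈ s ∩ t, f i) := by
    rw [IsIdempotentElem, ← prod_mul_distrib]
    exact prod_congr rfl fun i _ ↦ hf i
  rw [← prod_union_inter, ← prod_sdiff (inter_subset_left.trans subset_union_left), mul_assoc,
    hinter.eq]

theorem card_filter_offDiag_inter_nonempty_le {V : Type*} [Fintype V] [DecidableEq V]
    (E : Finset (Finset V)) :
    #{x ∈ E.offDiag | (x.1 ∩ x.2).Nonempty} ≤ ∑ v, #({e ∈ E | v ∈ e}.offDiag) := by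
  refine (card_le_card fun x hx ↦ ?_).trans card_biUnion_le
  obtain ⟨hx, v, hv⟩ := mem_filter.mp hx
  rw [mem_inter] at hv
  simp only [mem_offDiag, mem_biUnion, mem_univ, mem_filter, true_and] at hx ⊢
  exact ⟨v, ⟨hx.1, hv.1⟩, ⟨hx.2.1, hv.2⟩, hx.2.2⟩

theorem card_lt_card_union_of_card_eq {α : Type*} [DecidableEq α] {s t : Finset α}
    (hst : #s = #t) (hne : s ≠ t) : #s < #(s ∪ t) := by
  refine card_lt_card (ssubset_iff_subset_ne.mpr ⟨subset_union_left, fun h ↦ hne ?_⟩)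
  exact (eq_of_subset_of_card_le (union_eq_left.mp h.symm) hst.le).symm

theorem cast_card_offDiag {α R : Type*} [CommRing R] (s : Finset α) :
    (#s.offDiag : R) = #s * (#s - 1) := by
  rw [offDiag_card, Nat.cast_sub (Nat.le_mul_self _)]
  push_cast
  ring

end Finset

theorem integral_eq_measureReal_of_zero_or_one {Ω : Type*} [MeasurableSpace Ω]
    {μ : Measure Ω} {f : Ω → ℝ} (hf : Measurable f) (h01 : ∀ ω, f ω = 0 ∨ f ω = 1) :
    ∫ ω, f ω ∂μ = μ.real {ω | f ω = 1} := by
  calc ∫ ω, f ω ∂μ = ∫ ω, {ω | f ω = 1}.indicator 1 ω ∂μ := by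
        congr 1 with ω
        rcases h01 ω with h | h <;> simp [h]
    _ = μ.real {ω | f ω = 1} := integral_indicator_one (hf (measurableSet_singleton 1))

theorem ProbabilityTheory.iIndepFun.integral_finset_prod_eq_prod_integral {Ω ι : Type*}
    [MeasurableSpace Ω] {μ : Measure Ω} {X : ι → Ω → ℝ} (hX : iIndepFun X μ)
    (mX : ∀ i, AEStronglyMeasurable (X i) μ) (s : Finset ι) :
    ∫ ω, ∏ i ∈ s, X i ω ∂μ = ∏ i ∈ s, ∫ ω, X i ω ∂μ := by
  have := (hX.precomp (g := ((↑) : s → ι)) Subtype.val_injective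
    ).integral_fun_prod_eq_prod_integral fun i ↦ mX i
  rwa [prod_coe_sort s fun i ↦ ∫ ω, X i ω ∂μ,
    funext fun ω ↦ prod_coe_sort s fun i ↦ X i ω] at this

theorem pow_card_union_sub_le {V : Type*} [DecidableEq V] {q : ℝ} (hq0 : 0 ≤ q) (hq1 : q ≤ 1)
    {p : ℕ} {e f : Finset V} (he : #e = p) (hf : #f = p) (hne : e ≠ f) :
    q ^ #(e ∪ f) - q ^ #e * q ^ #f ≤ if (e ∩ f).Nonempty then q ^ (p + 1) else 0 := by
  split_ifs with hef
  · have hcard : p + 1 ≤ #(e ∪ f) :=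
      he ▸ card_lt_card_union_of_card_eq (he.trans hf.symm) hne
    linarith [pow_le_pow_of_le_one hq0 hq1 hcard,
      mul_nonneg (pow_nonneg hq0 #e) (pow_nonneg hq0 #f)]
  · rw [not_nonempty_iff_eq_empty, ← disjoint_iff_inter_eq_empty] at hef
    rw [card_union_of_disjoint hef, pow_add, sub_self]

theorem sum_diag_pow_card_union_sub {V : Type*} [DecidableEq V] (q : ℝ) {p : ℕ}
    {E : Finset (Finset V)} (hE : ∀ e ∈ E, #e = p) :
    ∑ x ∈ E.diag, (q ^ #(x.1 ∪ x.2) - q ^ #x.1 * q ^ #x.2) = #E * (q ^ p - q ^ (2 * p)) := by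
  rw [← diag_card, ← nsmul_eq_mul, ← sum_const]
  refine sum_congr rfl fun x hx ↦ ?_
  obtain ⟨hx, hxx⟩ := mem_diag.mp hx
  rw [← hxx, union_self, hE _ hx, ← pow_add, two_mul]

theorem sum_offDiag_pow_card_union_sub_le {V : Type*} [DecidableEq V] {q : ℝ} (hq0 : 0 ≤ q)
    (hq1 : q ≤ 1) {p : ℕ} {E : Finset (Finset V)} (hE : ∀ e ∈ E, #e = p) :
    ∑ x ∈ E.offDiag, (q ^ #(x.1 ∪ x.2) - q ^ #x.1 * q ^ #x.2)
      ≤ #{x ∈ E.offDiag | (x.1 ∩ x.2).Nonempty} * q ^ (p + 1) := by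
  calc _ ≤ ∑ x ∈ E.offDiag, if (x.1 ∩ x.2).Nonempty then q ^ (p + 1) else 0 := by
        refine sum_le_sum fun x hx ↦ ?_
        obtain ⟨h1, h2, hne⟩ := mem_offDiag.mp hx
        exact pow_card_union_sub_le hq0 hq1 (hE _ h1) (hE _ h2) hne
    _ = _ := by rw [← sum_filter, sum_const, nsmul_eq_mul]

section Moments

variable {Ω V : Type*} [MeasurableSpace Ω] {μ : Measure Ω} {ξ : V → Ω → ℝ} {q : ℝ}

theorem integral_finset_prod_eq_pow (hmeas : ∀ v, Measurable (ξ v)) (hindep : iIndepFun ξ μ)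
    (hmean : ∀ v, ∫ ω, ξ v ω ∂μ = q) (s : Finset V) :
    ∫ ω, ∏ v ∈ s, ξ v ω ∂μ = q ^ #s := by
  rw [hindep.integral_finset_prod_eq_prod_integral (fun v ↦ (hmeas v).aestronglyMeasurable),
    prod_congr rfl fun v _ ↦ hmean v, prod_const]

variable [IsProbabilityMeasure μ]

theorem integrable_finset_prod_of_zero_or_one (hmeas : ∀ v, Measurable (ξ v))
    (h01 : ∀ v ω, ξ v ω = 0 ∨ ξ v ω = 1) (s : Finset V) :
    Integrable (fun ω ↦ ∏ v ∈ s, ξ v ω) μ := by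
  refine .of_bound (Finset.measurable_prod s fun v _ ↦ hmeas v).aestronglyMeasurable 1
    (ae_of_all _ fun ω ↦ ?_)
  rw [norm_prod]
  exact prod_le_one (fun _ _ ↦ norm_nonneg _) fun v _ ↦ by
    rcases h01 v ω with h | h <;> simp [h]

theorem integral_sum_prod (hmeas : ∀ v, Measurable (ξ v)) (hindep : iIndepFun ξ μ)
    (h01 : ∀ v ω, ξ v ω = 0 ∨ ξ v ω = 1) (hmean : ∀ v, ∫ ω, ξ v ω ∂μ = q)
    (E : Finset (Finset V)) :
    ∫ ω, ∑ e ∈ E, ∏ v ∈ e, ξ v ω ∂μ = ∑ e ∈ E, q ^ #e := by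
  rw [integral_finsetSum E fun e _ ↦ integrable_finset_prod_of_zero_or_one hmeas h01 e]
  exact sum_congr rfl fun e _ ↦ integral_finset_prod_eq_pow hmeas hindep hmean e

theorem integral_sq_sum_prod [DecidableEq V] (hmeas : ∀ v, Measurable (ξ v))
    (hindep : iIndepFun ξ μ) (h01 : ∀ v ω, ξ v ω = 0 ∨ ξ v ω = 1)
    (hmean : ∀ v, ∫ ω, ξ v ω ∂μ = q) (E : Finset (Finset V)) :
    ∫ ω, (∑ e ∈ E, ∏ v ∈ e, ξ v ω) ^ 2 ∂μ = ∑ x ∈ E ×ˢ E, q ^ #(x.1 ∪ x.2) := by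
  have hidem (ω : Ω) (v : V) : IsIdempotentElem (ξ v ω) := by
    rcases h01 v ω with h | h <;> simp [IsIdempotentElem, h]
  simp_rw [sq, sum_mul_sum, ← sum_product',
    prod_mul_prod_eq_prod_union_of_isIdempotentElem (hidem _)]
  rw [integral_finsetSum _ fun x _ ↦ integrable_finset_prod_of_zero_or_one hmeas h01 _]
  exact sum_congr rfl fun x _ ↦ integral_finset_prod_eq_pow hmeas hindep hmean _

theorem integral_sq_sub_sq_integral_sum_prod [DecidableEq V] (hmeas : ∀ v, Measurable (ξ v))
    (hindep : iIndepFun ξ μ) (h01 : ∀ v ω, ξ v ω = 0 ∨ ξ v ω = 1)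
    (hmean : ∀ v, ∫ ω, ξ v ω ∂μ = q) (E : Finset (Finset V)) :
    (∫ ω, (∑ e ∈ E, ∏ v ∈ e, ξ v ω) ^ 2 ∂μ) - (∫ ω, ∑ e ∈ E, ∏ v ∈ e, ξ v ω ∂μ) ^ 2
      = ∑ x ∈ E ×ˢ E, (q ^ #(x.1 ∪ x.2) - q ^ #x.1 * q ^ #x.2) := by
  rw [integral_sq_sum_prod hmeas hindep h01 hmean, integral_sum_prod hmeas hindep h01 hmean, sq,
    sum_mul_sum, ← sum_product', sum_sub_distrib]

end Moments

/-- Variance bound for the edge-count `X = Σ_{e ∈ E} Π_{v ∈ e} ξ_v` of a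
`p`-uniform hypergraph under independent Bernoulli(q) vertex indicators:
`Var(X) ≤ |E|·(q^p − q^{2p}) + (Σ_v d_v(d_v − 1))·q^{p+1}`. -/
theorem stmt18 {V : Type*} [Fintype V] [DecidableEq V] {Ω : Type*}
    [MeasurableSpace Ω] (μ : Measure Ω) [IsProbabilityMeasure μ]
    (ξ : V → Ω → ℝ) (hmeas : ∀ v, Measurable (ξ v))
    (hindep : iIndepFun ξ μ)
    (hval : ∀ v ω, ξ v ω = 0 ∨ ξ v ω = 1)
    (q : ℝ) (hq0 : 0 ≤ q) (hq1 : q ≤ 1)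
    (hq : ∀ v, μ {ω | ξ v ω = 1} = ENNReal.ofReal q)
    (p : ℕ) (E : Finset (Finset V)) (hE : ∀ e ∈ E, e.card = p)
    (d : V → ℕ) (hd : ∀ v, d v = (E.filter (fun e => v ∈ e)).card) :
    (∫ ω, (∑ e ∈ E, ∏ v ∈ e, ξ v ω) ^ 2 ∂μ)
        - (∫ ω, ∑ e ∈ E, ∏ v ∈ e, ξ v ω ∂μ) ^ 2
      ≤ (E.card : ℝ) * (q ^ p - q ^ (2 * p))
        + (∑ v : V, (d v : ℝ) * ((d v : ℝ) - 1)) * q ^ (p + 1) := by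
  have hmean (v : V) : ∫ ω, ξ v ω ∂μ = q := by
    rw [integral_eq_measureReal_of_zero_or_one (hmeas v) (hval v), measureReal_def, hq v,
      ENNReal.toReal_ofReal hq0]
  rw [integral_sq_sub_sq_integral_sum_prod hmeas hindep hval hmean, ← diag_union_offDiag,
    sum_union (disjoint_diag_offDiag E), sum_diag_pow_card_union_sub q hE]
  gcongr _ + ?_
  calc _ ≤ #{x ∈ E.offDiag | (x.1 ∩ x.2).Nonempty} * q ^ (p + 1) :=
        sum_offDiag_pow_card_union_sub_le hq0 hq1 hE
    _ ≤ (∑ v, #({e ∈ E | v ∈ e}.offDiag) : ℕ) * q ^ (p + 1) := by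
        gcongr
        exact card_filter_offDiag_inter_nonempty_le E
    _ = _ := by simp only [Nat.cast_sum, cast_card_offDiag, hd]
end
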